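/- (Iwahori decomposition of the parahoric subgroup; GL_n case of Lemma 2.16.) Fix a block function b : {1,…,n} → {1,…,r}. Let g ∈ GL_n(ℤ_p) satisfy g_{ij} ∈ pℤ_p whenever b(i) < b(j). Then there exist unique matrices ū, m, u with g = ū·m·u, where: ū is lower block unipotent over ℤ_p (ū_{ii} = 1 and ū_{ij} = 0 unless i = j or b(i) > b(j), all entries in ℤ_p); m ∈ GL_n(ℤ_p) is block diagonal (m_{ij} = 0 unless b(i) = b(j)); and u is upper block unipotent with u_{ii} = 1, u_{ij} = 0 unless i = j or b(i) < b(j), and u_{ij} ∈ pℤ_p whenever b(i) < b(j). -/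

import Mathlib

/-- Lower block unipotent matrix with entries in `ℤ_p`: `A i i = 1`, `A i j = 0` unless
`i = j` or `b i > b j`, and all entries integral. -/
def LowerBlockUnipInt (p : ℕ) [Fact p.Prime] {n r : ℕ} (b : Fin n → Fin r)
    (A : Matrix (Fin n) (Fin n) ℚ_[p]) : Prop :=
  (∀ i, A i i = 1) ∧ (∀ i j, ¬(i = j ∨ b j < b i) → A i j = 0) ∧ (∀ i j, ‖A i j‖ ≤ 1)

/-- Block diagonal element of `GL_n(ℤ_p)`: integral entries, unit determinant,
`A i j = 0` unless `b i = b j`. -/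
def BlockDiagGLZ (p : ℕ) [Fact p.Prime] {n r : ℕ} (b : Fin n → Fin r)
    (A : Matrix (Fin n) (Fin n) ℚ_[p]) : Prop :=
  (∀ i j, ‖A i j‖ ≤ 1) ∧ ‖A.det‖ = 1 ∧ (∀ i j, b i ≠ b j → A i j = 0)

/-- Upper block unipotent matrix with above-block entries in `pℤ_p`: `A i i = 1`,
`A i j = 0` unless `i = j` or `b i < b j`, and `A i j ∈ pℤ_p` whenever `b i < b j`. -/
def UpperBlockUnipP (p : ℕ) [Fact p.Prime] {n r : ℕ} (b : Fin n → Fin r)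
    (A : Matrix (Fin n) (Fin n) ℚ_[p]) : Prop :=
  (∀ i, A i i = 1) ∧ (∀ i j, ¬(i = j ∨ b i < b j) → A i j = 0) ∧
    (∀ i j, b i < b j → ‖A i j‖ ≤ (p : ℝ)⁻¹)

/-!
Induction on the number of blocks. Write `g = [[A, B], [C, D]]` with `A` the first diagonal
block. Since `B ≡ 0 mod p`, `det g ≡ det A · det D`, so `A ∈ GL(ℤ_p)`, and
`g = [[1, 0], [C A⁻¹, 1]] · [[A, 0], [0, D - C A⁻¹ B]] · [[1, A⁻¹ B], [0, 1]]`,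
where `A⁻¹ B ≡ 0 mod p` and the Schur complement `D - C A⁻¹ B` satisfies the hypotheses again for
the remaining blocks. Conversely, multiplying out any factorization of the required shape forces
its first block row and column to be these, which reduces uniqueness to the remaining blocks.

Only the ultrametric inequality is used, so the argument runs over any nonarchimedean field, with
`pℤ_p` replaced by the ball `‖x‖ ≤ ε` for some `ε < 1`.
-/

open Matrix

section Norms

variable {K : Type*} [NormedField K]

lemma norm_eq_one_of_norm_mul_eq_one {x y : K} (hx : ‖x‖ ≤ 1) (hy : ‖y‖ ≤ 1)
    (h : ‖x * y‖ = 1) : ‖x‖ = 1 ∧ ‖y‖ = 1 := by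
  rw [norm_mul] at h
  constructor <;> nlinarith [norm_nonneg x, norm_nonneg y]

lemma forall_norm_fromBlocks_le {ι κ : Type*} {A : Matrix κ κ K} {B : Matrix κ ι K}
    {C : Matrix ι κ K} {D : Matrix ι ι K} {c : ℝ} :
    (∀ i j, ‖fromBlocks A B C D i j‖ ≤ c) ↔
      (∀ i j, ‖A i j‖ ≤ c) ∧ (∀ i j, ‖B i j‖ ≤ c) ∧ (∀ i j, ‖C i j‖ ≤ c) ∧
        ∀ i j, ‖D i j‖ ≤ c := by
  simp only [Sum.forall, fromBlocks_apply₁₁, fromBlocks_apply₁₂, fromBlocks_apply₂₁,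
    fromBlocks_apply₂₂, forall_and, and_assoc, and_left_comm]

variable [IsUltrametricDist K]

lemma IsUltrametricDist.norm_eq_of_norm_sub_lt {x y : K} (h : ‖y - x‖ < ‖x‖) : ‖y‖ = ‖x‖ := by
  have := IsUltrametricDist.norm_add_eq_max_of_norm_ne_norm h.ne'
  rwa [add_sub_cancel, max_eq_left h.le] at this

lemma IsUltrametricDist.norm_sub_le_of_le {x y : K} {c : ℝ} (hx : ‖x‖ ≤ c) (hy : ‖y‖ ≤ c) :
    ‖x - y‖ ≤ c := by
  rw [sub_eq_add_neg]
  exact (IsUltrametricDist.norm_add_le_max _ _).trans (max_le hx (by rwa [norm_neg]))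

lemma norm_prod_sub_prod_le {α : Type*} (s : Finset α) {f g : α → K} {ε : ℝ} (hε : 0 ≤ ε)
    (hf : ∀ i ∈ s, ‖f i‖ ≤ 1) (hg : ∀ i ∈ s, ‖g i‖ ≤ 1) (hfg : ∀ i ∈ s, ‖f i - g i‖ ≤ ε) :
    ‖∏ i ∈ s, f i - ∏ i ∈ s, g i‖ ≤ ε := by
  induction s using Finset.cons_induction with
  | empty => simpa using hε
  | cons a s ha ih =>
    simp only [Finset.mem_cons, forall_eq_or_imp] at hf hg hfg
    rw [Finset.prod_cons, Finset.prod_cons,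
      show f a * ∏ i ∈ s, f i - g a * ∏ i ∈ s, g i
        = f a * (∏ i ∈ s, f i - ∏ i ∈ s, g i) + (f a - g a) * ∏ i ∈ s, g i by ring]
    refine (IsUltrametricDist.norm_add_le_max _ _).trans (max_le ?_ ?_) <;> rw [norm_mul]
    · exact (mul_le_of_le_one_left (norm_nonneg _) hf.1).trans (ih hf.2 hg.2 hfg.2)
    · refine (mul_le_of_le_one_right (norm_nonneg _) ?_).trans hfg.1
      rw [norm_prod]
      exact Finset.prod_le_one (fun _ _ => norm_nonneg _) hg.2

variable {ι : Type*} [Fintype ι] [DecidableEq ι]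

lemma norm_det_le_one {A : Matrix ι ι K} (hA : ∀ i j, ‖A i j‖ ≤ 1) : ‖A.det‖ ≤ 1 := by
  rw [det_apply']
  refine IsUltrametricDist.norm_sum_le_of_forall_le_of_nonneg zero_le_one fun σ _ => ?_
  rw [norm_mul, norm_prod]
  exact mul_le_one₀ (IsUltrametricDist.norm_intCast_le_one K _)
    (Finset.prod_nonneg fun _ _ => norm_nonneg _)
    (Finset.prod_le_one (fun _ _ => norm_nonneg _) fun _ _ => hA _ _)

lemma norm_det_sub_det_le {A B : Matrix ι ι K} {ε : ℝ} (hε : 0 ≤ ε) (hA : ∀ i j, ‖A i j‖ ≤ 1)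
    (hB : ∀ i j, ‖B i j‖ ≤ 1) (hAB : ∀ i j, ‖A i j - B i j‖ ≤ ε) : ‖A.det - B.det‖ ≤ ε := by
  rw [det_apply', det_apply', ← Finset.sum_sub_distrib]
  refine IsUltrametricDist.norm_sum_le_of_forall_le_of_nonneg hε fun σ _ => ?_
  rw [← mul_sub, norm_mul]
  exact (mul_le_of_le_one_left (norm_nonneg _) (IsUltrametricDist.norm_intCast_le_one K _)).trans
    (norm_prod_sub_prod_le _ hε (fun _ _ => hA _ _) (fun _ _ => hB _ _) fun _ _ => hAB _ _)

lemma norm_mul_apply_le {m n o : Type*} [Fintype n] {A : Matrix m n K} {B : Matrix n o K}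
    {c : ℝ} (hc : 0 ≤ c) (hA : ∀ i j, ‖A i j‖ ≤ 1) (hB : ∀ i j, ‖B i j‖ ≤ c) (i : m) (j : o) :
    ‖(A * B) i j‖ ≤ c := by
  refine IsUltrametricDist.norm_sum_le_of_forall_le_of_nonneg hc fun k _ => ?_
  rw [norm_mul]
  exact (mul_le_of_le_one_left (norm_nonneg _) (hA i k)).trans (hB k j)

lemma norm_inv_apply_le_one {A : Matrix ι ι K} (hA : ∀ i j, ‖A i j‖ ≤ 1) (hdet : ‖A.det‖ = 1)
    (i j : ι) : ‖A⁻¹ i j‖ ≤ 1 := by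
  rw [inv_def, Matrix.smul_apply, smul_eq_mul, norm_mul, Ring.inverse_eq_inv', norm_inv, hdet,
    inv_one, one_mul, adjugate_apply]
  refine norm_det_le_one fun k l => ?_
  rw [updateRow_apply]
  split_ifs
  · rw [Pi.single_apply]; split_ifs <;> simp
  · exact hA k l

end Norms

section BlockMatrices

variable {R : Type*} {m n : Type*}

lemma exists_eq_fromBlocks {o p : Type*} (M : Matrix (m ⊕ n) (o ⊕ p) R) :
    ∃ A B C D, M = fromBlocks A B C D :=
  ⟨_, _, _, _, (fromBlocks_toBlocks M).symm⟩

lemma Matrix.eq_one_iff {α : Type*} [Zero α] [One α] [DecidableEq m] {A : Matrix m m α} :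
    A = 1 ↔ (∀ i, A i i = 1) ∧ ∀ i j, i ≠ j → A i j = 0 := by
  refine ⟨fun h => h ▸ ⟨fun _ => one_apply_eq _, fun _ _ => one_apply_ne⟩, fun ⟨h1, h0⟩ => ?_⟩
  ext i j
  rcases eq_or_ne i j with rfl | hij
  · simp [h1]
  · simp [h0 _ _ hij, hij]

variable [Fintype m] [Fintype n] [DecidableEq m]

theorem fromBlocks_lower_mul_diag_mul_upper [Semiring R] (Y : Matrix n m R) (L : Matrix n n R)
    (A : Matrix m m R) (M : Matrix n n R) (X : Matrix m n R) (U : Matrix n n R) :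
    fromBlocks 1 0 Y L * fromBlocks A 0 0 M * fromBlocks 1 X 0 U
      = fromBlocks A (A * X) (Y * A) (Y * A * X + L * M * U) := by
  simp [fromBlocks_multiply, Matrix.mul_assoc]

theorem fromBlocks_eq_lower_mul_diag_mul_upper_iff [CommRing R] {A : Matrix m m R}
    (hA : IsUnit A.det) (B : Matrix m n R) (C : Matrix n m R) (D : Matrix n n R)
    {Y : Matrix n m R} {L : Matrix n n R} {A' : Matrix m m R} {M : Matrix n n R}
    {X : Matrix m n R} {U : Matrix n n R} :
    fromBlocks A B C D = fromBlocks 1 0 Y L * fromBlocks A' 0 0 M * fromBlocks 1 X 0 U ↔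
      A' = A ∧ X = A⁻¹ * B ∧ Y = C * A⁻¹ ∧ L * M * U = D - C * A⁻¹ * B := by
  rw [fromBlocks_lower_mul_diag_mul_upper, fromBlocks_inj]
  constructor
  · rintro ⟨rfl, rfl, rfl, rfl⟩
    simp [nonsing_inv_mul_cancel_left _ _ hA, mul_nonsing_inv_cancel_right _ _ hA,
      Matrix.mul_assoc]
  · rintro ⟨rfl, rfl, rfl, h⟩
    simp [mul_nonsing_inv_cancel_left _ _ hA, nonsing_inv_mul_cancel_right _ _ hA, h,
      Matrix.mul_assoc]

end BlockMatrices

section IwahoriDecomposition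

variable {K : Type*} [NormedField K] (ε : ℝ) {ι κ : Type*} {r : ℕ} (b : ι → Fin r)

def IsLowerBlockUnipotent (A : Matrix ι ι K) : Prop :=
  (∀ i, A i i = 1) ∧ (∀ i j, ¬(i = j ∨ b j < b i) → A i j = 0) ∧ (∀ i j, ‖A i j‖ ≤ 1)

def IsBlockDiagonalGL [Fintype ι] [DecidableEq ι] (A : Matrix ι ι K) : Prop :=
  (∀ i j, ‖A i j‖ ≤ 1) ∧ ‖A.det‖ = 1 ∧ (∀ i j, b i ≠ b j → A i j = 0)

def IsUpperBlockUnipotent (A : Matrix ι ι K) : Prop :=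
  (∀ i, A i i = 1) ∧ (∀ i j, ¬(i = j ∨ b i < b j) → A i j = 0) ∧
    (∀ i j, b i < b j → ‖A i j‖ ≤ ε)

def IsParahoric [Fintype ι] [DecidableEq ι] (g : Matrix ι ι K) : Prop :=
  (∀ i j, ‖g i j‖ ≤ 1) ∧ ‖g.det‖ = 1 ∧ ∀ i j, b i < b j → ‖g i j‖ ≤ ε

def IsIwahoriFactorization [Fintype ι] [DecidableEq ι] (g : Matrix ι ι K)
    (t : Matrix ι ι K × Matrix ι ι K × Matrix ι ι K) : Prop :=
  IsLowerBlockUnipotent b t.1 ∧ IsBlockDiagonalGL b t.2.1 ∧ IsUpperBlockUnipotent ε b t.2.2 ∧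
    g = t.1 * t.2.1 * t.2.2

section Reindex

variable {ε b} (e : κ ≃ ι)

lemma IsLowerBlockUnipotent.submatrix {A : Matrix ι ι K} (h : IsLowerBlockUnipotent b A) :
    IsLowerBlockUnipotent (b ∘ e) (A.submatrix e e) :=
  ⟨fun _ => h.1 _, fun _ _ hij => h.2.1 _ _ (by simpa using hij), fun _ _ => h.2.2 _ _⟩

lemma IsUpperBlockUnipotent.submatrix {A : Matrix ι ι K} (h : IsUpperBlockUnipotent ε b A) :
    IsUpperBlockUnipotent ε (b ∘ e) (A.submatrix e e) :=
  ⟨fun _ => h.1 _, fun _ _ hij => h.2.1 _ _ (by simpa using hij), fun _ _ hij => h.2.2 _ _ hij⟩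

variable [Fintype ι] [DecidableEq ι] [Fintype κ] [DecidableEq κ]

lemma IsBlockDiagonalGL.submatrix {A : Matrix ι ι K} (h : IsBlockDiagonalGL b A) :
    IsBlockDiagonalGL (b ∘ e) (A.submatrix e e) :=
  ⟨fun _ _ => h.1 _ _, by rw [det_submatrix_equiv_self]; exact h.2.1,
    fun _ _ hij => h.2.2 _ _ hij⟩

lemma IsParahoric.submatrix {g : Matrix ι ι K} (h : IsParahoric ε b g) :
    IsParahoric ε (b ∘ e) (g.submatrix e e) :=
  ⟨fun _ _ => h.1 _ _, by rw [det_submatrix_equiv_self]; exact h.2.1,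
    fun _ _ hij => h.2.2 _ _ hij⟩

lemma IsIwahoriFactorization.submatrix {g L M U : Matrix ι ι K}
    (h : IsIwahoriFactorization ε b g (L, M, U)) :
    IsIwahoriFactorization ε (b ∘ e) (g.submatrix e e)
      (L.submatrix e e, M.submatrix e e, U.submatrix e e) :=
  ⟨h.1.submatrix e, h.2.1.submatrix e, h.2.2.1.submatrix e, by
    rw [h.2.2.2, submatrix_mul_equiv, submatrix_mul_equiv]⟩

lemma existsUnique_isIwahoriFactorization_submatrix_iff {g : Matrix ι ι K} :
    (∃! t, IsIwahoriFactorization ε (b ∘ e) (g.submatrix e e) t) ↔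
      ∃! t, IsIwahoriFactorization ε b g t := by
  let φ : Matrix ι ι K ≃ Matrix κ κ K := reindex e.symm e.symm
  refine (Equiv.existsUnique_congr (φ.prodCongr (φ.prodCongr φ)) fun ⟨L, M, U⟩ => ?_).symm
  refine ⟨fun h => h.submatrix e, fun h => ?_⟩
  simpa [φ, Function.comp_assoc, submatrix_submatrix] using h.submatrix e.symm

end Reindex

section Blocks

variable {ε b} {A : Matrix κ κ K} {B : Matrix κ ι K} {C : Matrix ι κ K} {D : Matrix ι ι K}

lemma isLowerBlockUnipotent_fromBlocks_iff [DecidableEq κ] :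
    IsLowerBlockUnipotent (Sum.elim (fun _ => 0) (Fin.succ ∘ b)) (fromBlocks A B C D) ↔
      A = 1 ∧ B = 0 ∧ (∀ i j, ‖C i j‖ ≤ 1) ∧ IsLowerBlockUnipotent b D := by
  constructor
  · rintro ⟨h1, h0, hn⟩
    refine ⟨Matrix.eq_one_iff.2 ⟨fun i => h1 (.inl i), fun i j hij => h0 (.inl i) (.inl j) ?_⟩,
      Matrix.ext fun i j => h0 (.inl i) (.inr j) (by simp), fun i j => hn (.inr i) (.inl j),
      fun i => h1 (.inr i), fun i j hij => h0 (.inr i) (.inr j) ?_, fun i j => hn (.inr i) (.inr j)⟩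
    all_goals simpa using hij
  · rintro ⟨rfl, rfl, hC, hD1, hD0, hDn⟩
    refine ⟨Sum.forall.2 ⟨by simp, hD1⟩, ?_,
      forall_norm_fromBlocks_le.2 ⟨fun i j => ?_, by simp, hC, hDn⟩⟩
    · rintro (i | i) (j | j) hij <;> simp_all [one_apply]
    · rw [one_apply]; split_ifs <;> simp

lemma forall_lt_imp_norm_fromBlocks_le :
    (∀ i j, Sum.elim (fun _ => 0) (Fin.succ ∘ b) i < Sum.elim (fun _ => 0) (Fin.succ ∘ b) j →
        ‖fromBlocks A B C D i j‖ ≤ ε) ↔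
      (∀ i j, ‖B i j‖ ≤ ε) ∧ ∀ i j, b i < b j → ‖D i j‖ ≤ ε := by
  simp [Sum.forall, Fin.succ_pos]

lemma isUpperBlockUnipotent_fromBlocks_iff [DecidableEq κ] :
    IsUpperBlockUnipotent ε (Sum.elim (fun _ => 0) (Fin.succ ∘ b)) (fromBlocks A B C D) ↔
      A = 1 ∧ (∀ i j, ‖B i j‖ ≤ ε) ∧ C = 0 ∧ IsUpperBlockUnipotent ε b D := by
  rw [IsUpperBlockUnipotent, forall_lt_imp_norm_fromBlocks_le, Matrix.eq_one_iff,
    ← Matrix.ext_iff]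
  simp [IsUpperBlockUnipotent, Sum.forall, forall_and, and_assoc, and_left_comm]

variable [IsUltrametricDist K]

lemma isBlockDiagonalGL_fromBlocks_iff [Fintype ι] [DecidableEq ι] [Fintype κ] [DecidableEq κ] :
    IsBlockDiagonalGL (Sum.elim (fun _ => 0) (Fin.succ ∘ b)) (fromBlocks A B C D) ↔
      (∀ i j, ‖A i j‖ ≤ 1) ∧ ‖A.det‖ = 1 ∧ B = 0 ∧ C = 0 ∧ IsBlockDiagonalGL b D := by
  have hblock : (∀ i j, Sum.elim (fun _ => 0) (Fin.succ ∘ b) i ≠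
      Sum.elim (fun _ => 0) (Fin.succ ∘ b) j → fromBlocks A B C D i j = 0) ↔
      B = 0 ∧ C = 0 ∧ ∀ i j, b i ≠ b j → D i j = 0 := by
    simp [Sum.forall, ← Matrix.ext_iff, (Fin.succ_ne_zero _).symm, forall_and, and_left_comm]
  rw [IsBlockDiagonalGL, IsBlockDiagonalGL, hblock, forall_norm_fromBlocks_le]
  constructor
  · rintro ⟨⟨hA, -, -, hD⟩, hdet, rfl, rfl, hD0⟩
    rw [det_fromBlocks_zero₁₂] at hdet
    obtain ⟨hAdet, hDdet⟩ :=
      norm_eq_one_of_norm_mul_eq_one (norm_det_le_one hA) (norm_det_le_one hD) hdet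
    exact ⟨hA, hAdet, rfl, rfl, hD, hDdet, hD0⟩
  · rintro ⟨hA, hAdet, rfl, rfl, hD, hDdet, hD0⟩
    refine ⟨⟨hA, by simp, by simp, hD⟩, ?_, rfl, rfl, hD0⟩
    rw [det_fromBlocks_zero₁₂, norm_mul, hAdet, hDdet, one_mul]

end Blocks

section Parahoric

variable [IsUltrametricDist K] [Fintype ι] [DecidableEq ι] [Fintype κ] [DecidableEq κ]
  {ε b} {A : Matrix κ κ K} {B : Matrix κ ι K} {C : Matrix ι κ K} {D : Matrix ι ι K}

lemma IsParahoric.norm_det_topLeft_eq_one (hε0 : 0 ≤ ε) (hε1 : ε < 1)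
    (h : IsParahoric ε (Sum.elim (fun _ => 0) (Fin.succ ∘ b)) (fromBlocks A B C D)) :
    ‖A.det‖ = 1 := by
  obtain ⟨hint, hdet, hsmall⟩ := h
  have hint' := forall_norm_fromBlocks_le.1 hint
  have hB := (forall_lt_imp_norm_fromBlocks_le.1 hsmall).1
  -- Replacing `B`, whose entries lie in the ε-ball, by `0` moves the determinant by at most ε < 1.
  have hclose : ‖(fromBlocks A 0 C D).det - (fromBlocks A B C D).det‖
      < ‖(fromBlocks A B C D).det‖ := by
    rw [hdet]
    refine lt_of_le_of_lt (norm_det_sub_det_le hε0 ?_ hint fun i j => ?_) hε1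
    · exact forall_norm_fromBlocks_le.2 ⟨hint'.1, by simp, hint'.2.2⟩
    · rcases i with i | i <;> rcases j with j | j <;> simp [hε0, hB]
  have hAD := IsUltrametricDist.norm_eq_of_norm_sub_lt hclose
  rw [hdet, det_fromBlocks_zero₁₂] at hAD
  exact (norm_eq_one_of_norm_mul_eq_one (norm_det_le_one hint'.1)
    (norm_det_le_one hint'.2.2.2) hAD).1

lemma IsParahoric.schur_complement (hε0 : 0 ≤ ε) (hε1 : ε < 1)
    (h : IsParahoric ε (Sum.elim (fun _ => 0) (Fin.succ ∘ b)) (fromBlocks A B C D)) :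
    IsParahoric ε b (D - C * A⁻¹ * B) := by
  have hA := h.norm_det_topLeft_eq_one hε0 hε1
  obtain ⟨hint, hdet, hsmall⟩ := h
  obtain ⟨hAint, -, hCint, hDint⟩ := forall_norm_fromBlocks_le.1 hint
  obtain ⟨hB, hDsmall⟩ := forall_lt_imp_norm_fromBlocks_le.1 hsmall
  have hCAB := norm_mul_apply_le hε0
    (norm_mul_apply_le zero_le_one hCint (norm_inv_apply_le_one hAint hA)) hB
  refine ⟨fun i j => IsUltrametricDist.norm_sub_le_of_le (hDint i j) ((hCAB i j).trans hε1.le),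
    ?_, fun i j hij => IsUltrametricDist.norm_sub_le_of_le (hDsmall i j hij) (hCAB i j)⟩
  let := A.invertibleOfIsUnitDet (norm_pos_iff.1 (hA ▸ one_pos)).isUnit
  rwa [det_fromBlocks₁₁, invOf_eq_nonsing_inv, norm_mul, hA, one_mul] at hdet

end Parahoric

section Iwahori

variable [IsUltrametricDist K] {ε b}

theorem existsUnique_isIwahoriFactorization_fromBlocks [Fintype ι] [DecidableEq ι] [Fintype κ]
    [DecidableEq κ] (hε0 : 0 ≤ ε) (hε1 : ε < 1)
    (ih : ∀ g : Matrix ι ι K, IsParahoric ε b g → ∃! t, IsIwahoriFactorization ε b g t)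
    {A : Matrix κ κ K} {B : Matrix κ ι K} {C : Matrix ι κ K} {D : Matrix ι ι K}
    (hg : IsParahoric ε (Sum.elim (fun _ => 0) (Fin.succ ∘ b)) (fromBlocks A B C D)) :
    ∃! t, IsIwahoriFactorization ε (Sum.elim (fun _ => 0) (Fin.succ ∘ b))
      (fromBlocks A B C D) t := by
  have hAdet := hg.norm_det_topLeft_eq_one hε0 hε1
  have hAunit : IsUnit A.det := (norm_pos_iff.1 (hAdet ▸ one_pos)).isUnit
  obtain ⟨⟨L, M, U⟩, ⟨hL, hM, hU, hLMU⟩, huniq⟩ := ih _ (hg.schur_complement hε0 hε1)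
  obtain ⟨hint, -, hsmall⟩ := hg
  obtain ⟨hAint, -, hCint, -⟩ := forall_norm_fromBlocks_le.1 hint
  have hAinv := norm_inv_apply_le_one hAint hAdet
  refine ⟨(fromBlocks 1 0 (C * A⁻¹) L, fromBlocks A 0 0 M, fromBlocks 1 (A⁻¹ * B) 0 U),
    ⟨?_, ?_, ?_, ?_⟩, ?_⟩
  · exact isLowerBlockUnipotent_fromBlocks_iff.2
      ⟨rfl, rfl, norm_mul_apply_le zero_le_one hCint hAinv, hL⟩
  · exact isBlockDiagonalGL_fromBlocks_iff.2 ⟨hAint, hAdet, rfl, rfl, hM⟩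
  · exact isUpperBlockUnipotent_fromBlocks_iff.2
      ⟨rfl, norm_mul_apply_le hε0 hAinv (forall_lt_imp_norm_fromBlocks_le.1 hsmall).1, rfl, hU⟩
  · exact (fromBlocks_eq_lower_mul_diag_mul_upper_iff hAunit B C D).2 ⟨rfl, rfl, rfl, hLMU.symm⟩
  rintro ⟨L', M', U'⟩ ⟨hL', hM', hU', hfac⟩
  obtain ⟨L₁, L₂, Y', L₄, rfl⟩ := exists_eq_fromBlocks L'
  obtain ⟨A', M₂, M₃, M₄, rfl⟩ := exists_eq_fromBlocks M'
  obtain ⟨U₁, X', U₃, U₄, rfl⟩ := exists_eq_fromBlocks U'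
  obtain ⟨rfl, rfl, -, hL₄⟩ := isLowerBlockUnipotent_fromBlocks_iff.1 hL'
  obtain ⟨-, -, rfl, rfl, hM₄⟩ := isBlockDiagonalGL_fromBlocks_iff.1 hM'
  obtain ⟨rfl, -, rfl, hU₄⟩ := isUpperBlockUnipotent_fromBlocks_iff.1 hU'
  obtain ⟨rfl, rfl, rfl, h₄⟩ := (fromBlocks_eq_lower_mul_diag_mul_upper_iff hAunit B C D).1 hfac
  obtain ⟨rfl, rfl, rfl⟩ : L₄ = L ∧ M₄ = M ∧ U₄ = U := by
    simpa using huniq (L₄, M₄, U₄) ⟨hL₄, hM₄, hU₄, h₄.symm⟩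
  rfl

theorem existsUnique_isIwahoriFactorization [Fintype ι] [DecidableEq ι] (hε0 : 0 ≤ ε)
    (hε1 : ε < 1) {g : Matrix ι ι K} (hg : IsParahoric ε b g) :
    ∃! t, IsIwahoriFactorization ε b g t := by
  induction r generalizing ι with
  | zero =>
    have : IsEmpty ι := ⟨fun i => (b i).elim0⟩
    refine ⟨(1, 1, 1), ⟨?_, ?_, ?_, Subsingleton.elim _ _⟩, fun _ _ => Subsingleton.elim _ _⟩ <;>
      simp [IsLowerBlockUnipotent, IsBlockDiagonalGL, IsUpperBlockUnipotent]
  | succ r ih =>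
    let e := Equiv.sumCompl fun i => b i = 0
    let b' : {i // ¬b i = 0} → Fin r := fun i => (b i).pred i.2
    have hb : b ∘ e = Sum.elim (fun _ => 0) (Fin.succ ∘ b') := by
      funext i
      rcases i with i | i
      · exact i.2
      · simp [e, b']
    rw [← existsUnique_isIwahoriFactorization_submatrix_iff e, hb,
      ← fromBlocks_toBlocks (g.submatrix e e)]
    refine existsUnique_isIwahoriFactorization_fromBlocks hε0 hε1 (fun _ => ih) ?_
    rw [fromBlocks_toBlocks, ← hb]
    exact hg.submatrix e

end Iwahori

end IwahoriDecomposition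

theorem statement2_general (p : ℕ) [Fact p.Prime] (n r : ℕ)
    (b : Fin n → Fin r)
    (g : Matrix (Fin n) (Fin n) ℚ_[p])
    (hgint : ∀ i j, ‖g i j‖ ≤ 1) (hgdet : ‖g.det‖ = 1)
    (hgp : ∀ i j, b i < b j → ‖g i j‖ ≤ (p : ℝ)⁻¹) :
    ∃ ubar m u : Matrix (Fin n) (Fin n) ℚ_[p],
      LowerBlockUnipInt p b ubar ∧ BlockDiagGLZ p b m ∧ UpperBlockUnipP p b u ∧
      g = ubar * m * u ∧
      ∀ ubar' m' u' : Matrix (Fin n) (Fin n) ℚ_[p],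
        LowerBlockUnipInt p b ubar' → BlockDiagGLZ p b m' → UpperBlockUnipP p b u' →
        g = ubar' * m' * u' → ubar' = ubar ∧ m' = m ∧ u' = u := by
  have hp : (p : ℝ)⁻¹ < 1 := inv_lt_one_of_one_lt₀ (mod_cast (Fact.out : p.Prime).one_lt)
  obtain ⟨⟨ubar, m, u⟩, ⟨hL, hM, hU, hg⟩, huniq⟩ :=
    existsUnique_isIwahoriFactorization (by positivity) hp ⟨hgint, hgdet, hgp⟩
  refine ⟨ubar, m, u, hL, hM, hU, hg, fun ubar' m' u' hL' hM' hU' hg' => ?_⟩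
  simpa using huniq (ubar', m', u') ⟨hL', hM', hU', hg'⟩

/-- Iwahori decomposition of the parahoric subgroup; `GL_n` case of
Lemma 2.16: any `g ∈ GL_n(ℤ_p)` with `g i j ∈ pℤ_p` whenever `b i < b j` factors
uniquely as `g = ū · m · u` with `ū` lower block unipotent integral, `m` block diagonal
in `GL_n(ℤ_p)` and `u` upper block unipotent with above-block entries in `pℤ_p`. -/
theorem statement2 (p : ℕ) [Fact p.Prime] (n r : ℕ)
    (b : Fin n → Fin r) (hb : Monotone b) (hbs : Function.Surjective b)
    (g : Matrix (Fin n) (Fin n) ℚ_[p])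
    (hgint : ∀ i j, ‖g i j‖ ≤ 1) (hgdet : ‖g.det‖ = 1)
    (hgp : ∀ i j, b i < b j → ‖g i j‖ ≤ (p : ℝ)⁻¹) :
    ∃ ubar m u : Matrix (Fin n) (Fin n) ℚ_[p],
      LowerBlockUnipInt p b ubar ∧ BlockDiagGLZ p b m ∧ UpperBlockUnipP p b u ∧
      g = ubar * m * u ∧
      ∀ ubar' m' u' : Matrix (Fin n) (Fin n) ℚ_[p],
        LowerBlockUnipInt p b ubar' → BlockDiagGLZ p b m' → UpperBlockUnipP p b u' →
        g = ubar' * m' * u' → ubar' = ubar ∧ m' = m ∧ u' = u :=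
  statement2_general p n r b g hgint hgdet hgp
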